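/- arXiv:2204.04610 — 2 statements merged into one kernel-verified Lean document; each statement's English description precedes it below -/
import Mathlib

section
/- Let r ∈ (3,∞) and let s > 0 satisfy 2/s + 3/r ≤ 1. Then for every ε > 0 there exists a constant C > 0 depending only on ε, r and s such that for every measurable function f : ℝ³ → ℝ with finite weak-L^r quasinorm and every continuously differentiable g : ℝ³ → ℝ with ‖g‖_{L²(ℝ³)} < ∞ and ‖∇g‖_{L²(ℝ³)} < ∞, the product f·g is in L²(ℝ³) and ‖f·g‖_{L²(ℝ³)}² ≤ ε · ‖∇g‖_{L²(ℝ³)}² + C · (‖f‖_{L^r_ω}^s + 1) · ‖g‖_{L²(ℝ³)}². -/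
open MeasureTheory ENNReal

/-- The weak-`L^r` quasinorm on ℝ³ (with Lebesgue measure):
`‖f‖_{L^r_ω} = sup_{λ>0} λ |{x : |f x| > λ}|^{1/r}`. -/
noncomputable def weakLNorm (r : ℝ) (f : EuclideanSpace ℝ (Fin 3) → ℝ) : ℝ≥0∞ :=
  ⨆ (l : ℝ) (_ : 0 < l), ENNReal.ofReal l * (volume {x | l < |f x|}) ^ (1 / r)

/-! Split `f` at a height `a`. Where `|f| ≤ a`, `‖f g‖₂ ≤ a ‖g‖₂`. On `{|f| > a}`, Hölder with
exponents `3` and `6` and the Sobolev embedding `‖g‖₆ ≲ ‖∇g‖₂` (extended from compactly supported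
functions by cutting off) bound `‖f g‖₂` by `‖f 1_{|f|>a}‖₃ ‖∇g‖₂`, and a dyadic decomposition of
the weak-`L^r` bound gives `‖f 1_{|f|>a}‖₃³ ≲ ‖f‖^r a^{3-r}`. With `a = D ‖f‖^{r/(r-3)}` this is
`≲ D^{3-r}`, so a large `D` makes the first term at most `ε ‖∇g‖₂²`, while
`a² = D² ‖f‖^{2r/(r-3)} ≤ D² (‖f‖^s + 1)` because `2r/(r-3) ≤ s`. -/

open Filter Topology Set Module
open scoped NNReal

local notation "ℝ³" => EuclideanSpace ℝ (Fin 3)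

section Sobolev

theorem exists_cutoff_seq (E : Type*) [NormedAddCommGroup E] [NormedSpace ℝ E]
    [FiniteDimensional ℝ E] :
    ∃ (χ : ℕ → E → ℝ) (K : ℝ), (∀ n, ContDiff ℝ 1 (χ n)) ∧ (∀ n, HasCompactSupport (χ n)) ∧
      (∀ n x, ‖χ n x‖ ≤ 1) ∧ (∀ n x, ‖fderiv ℝ (χ n) x‖ ≤ K / (n + 1)) ∧
      ∀ x, ∀ᶠ n in atTop, χ n x = 1 := by
  let φ : ContDiffBump (0 : E) := ⟨1, 2, one_pos, one_lt_two⟩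
  obtain ⟨K, hK⟩ := (φ.hasCompactSupport.fderiv ℝ).exists_bound_of_continuous
    (φ.contDiff.continuous_fderiv (n := 1) one_ne_zero)
  have hc : ∀ n : ℕ, ((n : ℝ) + 1)⁻¹ ≠ 0 := fun n => by positivity
  refine ⟨fun n x => φ (((n : ℝ) + 1)⁻¹ • x), K, fun n => φ.contDiff.comp (contDiff_const_smul _),
    fun n => φ.hasCompactSupport.comp_homeomorph (Homeomorph.smulOfNeZero _ (hc n)),
    fun n x => by simpa [abs_of_nonneg φ.nonneg] using φ.le_one, fun n x => ?_, fun x => ?_⟩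
  · have hn : (0 : ℝ) ≤ ((n : ℝ) + 1)⁻¹ := by positivity
    rw [fderiv_comp_smul, norm_smul, div_eq_mul_inv, mul_comm, Real.norm_of_nonneg hn]
    exact mul_le_mul_of_nonneg_right (hK _) hn
  · filter_upwards [eventually_ge_atTop ⌈‖x‖⌉₊] with n hn
    apply φ.one_of_mem_closedBall
    have hn' : (0 : ℝ) ≤ ((n : ℝ) + 1)⁻¹ := by positivity
    rw [mem_closedBall_zero_iff, norm_smul, Real.norm_of_nonneg hn',
      inv_mul_le_iff₀ (by positivity)]
    have := (Nat.le_ceil ‖x‖).trans (Nat.cast_le.2 hn)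
    simp only [φ]
    linarith

variable {E F : Type*} [NormedAddCommGroup E] [NormedSpace ℝ E] [FiniteDimensional ℝ E]
  [MeasurableSpace E] [BorelSpace E] {μ : Measure E}

theorem eLpNorm_fderiv_smul_le [NormedAddCommGroup F] [NormedSpace ℝ F] {χ : E → ℝ} {u : E → F}
    (hχ : ContDiff ℝ 1 χ) (hu : ContDiff ℝ 1 u) {c : ℝ} (hχ_le_one : ∀ x, ‖χ x‖ ≤ 1)
    (hχ' : ∀ x, ‖fderiv ℝ χ x‖ ≤ c) {p : ℝ≥0∞} (hp : 1 ≤ p) :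
    eLpNorm (fderiv ℝ fun x => χ x • u x) p μ ≤
      eLpNorm (fderiv ℝ u) p μ + ENNReal.ofReal c * eLpNorm u p μ := by
  have hderiv : fderiv ℝ (fun x => χ x • u x) =
      fun x => χ x • fderiv ℝ u x + (fderiv ℝ χ x).smulRight (u x) := funext fun x =>
    fderiv_fun_smul (hχ.differentiable one_ne_zero x) (hu.differentiable one_ne_zero x)
  have hχ_cont := hχ.continuous
  have hχ'_cont := hχ.continuous_fderiv one_ne_zero
  have hu_cont := hu.continuous
  have hu'_cont := hu.continuous_fderiv one_ne_zero
  rw [hderiv]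
  refine (eLpNorm_add_le (f := fun x => χ x • fderiv ℝ u x)
    (g := fun x => (fderiv ℝ χ x).smulRight (u x)) (by fun_prop : Continuous _).aestronglyMeasurable
    (by fun_prop : Continuous _).aestronglyMeasurable hp).trans (add_le_add ?_ ?_)
  · refine eLpNorm_mono fun x => ?_
    rw [norm_smul]
    exact mul_le_of_le_one_left (norm_nonneg _) (hχ_le_one x)
  · refine eLpNorm_le_mul_eLpNorm_of_ae_le_mul (ae_of_all _ fun x => ?_) p
    rw [ContinuousLinearMap.norm_smulRight_apply]
    exact mul_le_mul_of_nonneg_right (hχ' x) (norm_nonneg _)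

variable [μ.IsAddHaarMeasure]

theorem eLpNorm_le_eLpNorm_fderiv_of_eq_inner_of_eLpNorm_ne_top [NormedAddCommGroup F]
    [InnerProductSpace ℝ F] {u : E → F} (hu : ContDiff ℝ 1 u) {p p' : ℝ≥0}
    (hu_Lp : eLpNorm u p μ ≠ ∞) (hp : 1 ≤ p) (hn : 0 < finrank ℝ E)
    (hp' : (p' : ℝ)⁻¹ = p⁻¹ - (finrank ℝ E : ℝ)⁻¹) :
    eLpNorm u p' μ ≤ eLpNormLESNormFDerivOfEqInnerConst μ p * eLpNorm (fderiv ℝ u) p μ := by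
  obtain ⟨χ, K, hχ, hχ_supp, hχ_le_one, hχ', hχ_eq_one⟩ := exists_cutoff_seq E
  set C : ℝ≥0∞ := (eLpNormLESNormFDerivOfEqInnerConst μ p : ℝ≥0∞)
  let bound : ℕ → ℝ≥0∞ := fun n =>
    C * (eLpNorm (fderiv ℝ u) p μ + ENNReal.ofReal (K / (n + 1)) * eLpNorm u p μ)
  have h_le_bound (n : ℕ) : eLpNorm (fun x => χ n x • u x) p' μ ≤ bound n := by
    refine (eLpNorm_le_eLpNorm_fderiv_of_eq_inner μ ((hχ n).smul hu) (hχ_supp n).smul_right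
      hp hn hp').trans (mul_le_mul_right ?_ _)
    exact eLpNorm_fderiv_smul_le (hχ n) hu (hχ_le_one n) (hχ' n) (by exact_mod_cast hp)
  have h_bound_tendsto : Tendsto bound atTop (𝓝 (C * eLpNorm (fderiv ℝ u) p μ)) := by
    have h0 : Tendsto (fun n : ℕ => ENNReal.ofReal (K / (n + 1))) atTop (𝓝 0) := by
      simpa [div_eq_mul_inv] using
        ENNReal.tendsto_ofReal (tendsto_one_div_add_atTop_nhds_zero_nat.const_mul K)
    simpa using ENNReal.Tendsto.const_mul (tendsto_const_nhds.add
      (ENNReal.Tendsto.mul_const h0 (Or.inr hu_Lp))) (Or.inr coe_ne_top)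
  have h_tendsto (x : E) : Tendsto (fun n => χ n x • u x) atTop (𝓝 (u x)) :=
    tendsto_nhds_of_eventually_eq ((hχ_eq_one x).mono fun n hn => by simp [hn])
  calc eLpNorm u p' μ
      ≤ atTop.liminf fun n => eLpNorm (fun x => χ n x • u x) p' μ :=
        Lp.eLpNorm_lim_le_liminf_eLpNorm
          (fun n => ((hχ n).continuous.smul hu.continuous).aestronglyMeasurable) u
          (ae_of_all _ h_tendsto)
    _ ≤ atTop.liminf bound := liminf_le_liminf (Eventually.of_forall h_le_bound)
    _ = C * eLpNorm (fderiv ℝ u) p μ := h_bound_tendsto.liminf_eq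

end Sobolev

section Holder

variable {α : Type*} [MeasurableSpace α] {μ : Measure α}

theorem eLpNorm_rpow_eq_restrict_add_restrict_compl {E : Type*} [NormedAddCommGroup E]
    (u : α → E) {p : ℝ≥0} (hp : p ≠ 0) {s : Set α} (hs : MeasurableSet s) :
    eLpNorm u p μ ^ (p : ℝ) =
      eLpNorm u p (μ.restrict s) ^ (p : ℝ) + eLpNorm u p (μ.restrict sᶜ) ^ (p : ℝ) := by
  simp_rw [eLpNorm_nnreal_pow_eq_lintegral hp]
  exact (lintegral_add_compl _ hs).symm

instance instHolderTripleThreeSixTwo : ENNReal.HolderTriple 3 6 2 where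
  inv_add_inv_eq_inv := by
    rw [← ENNReal.toReal_eq_toReal_iff' (by simp) (by simp), ENNReal.toReal_add (by simp) (by simp)]
    simp only [ENNReal.toReal_inv, ENNReal.toReal_ofNat]
    norm_num

theorem eLpNorm_mul_sq_le {f g : α → ℝ} (hf : Measurable f) (hg : AEStronglyMeasurable g μ)
    (a : ℝ) :
    eLpNorm (fun x => f x * g x) 2 μ ^ 2 ≤
      eLpNorm f 3 (μ.restrict {x | a < |f x|}) ^ 2 * eLpNorm g 6 μ ^ 2 +
        ENNReal.ofReal a ^ 2 * eLpNorm g 2 μ ^ 2 := by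
  set S := {x | a < |f x|}
  have hS : MeasurableSet S := measurableSet_lt measurable_const hf.abs
  have h_large : eLpNorm (fun x => f x * g x) 2 (μ.restrict S) ≤
      eLpNorm f 3 (μ.restrict S) * eLpNorm g 6 μ :=
    (eLpNorm_smul_le_mul_eLpNorm hg.restrict hf.aestronglyMeasurable).trans
      (mul_le_mul_right (eLpNorm_mono_measure _ Measure.restrict_le_self) _)
  have h_small : eLpNorm (fun x => f x * g x) 2 (μ.restrict Sᶜ) ≤
      ENNReal.ofReal a * eLpNorm g 2 μ := by
    refine (eLpNorm_le_mul_eLpNorm_of_ae_le_mul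
      (ae_restrict_of_forall_mem hS.compl fun x hx => ?_) 2).trans
      (mul_le_mul_right (eLpNorm_mono_measure _ Measure.restrict_le_self) _)
    rw [norm_mul]
    exact mul_le_mul_of_nonneg_right (not_lt.1 hx) (norm_nonneg _)
  have h_split := eLpNorm_rpow_eq_restrict_add_restrict_compl (μ := μ) (fun x => f x * g x)
    (p := 2) two_ne_zero hS
  simp only [NNReal.coe_ofNat, ENNReal.coe_ofNat, ENNReal.rpow_ofNat] at h_split
  rw [h_split, ← mul_pow, ← mul_pow]
  gcongr

end Holder

section WeakTail

variable {α : Type*} [MeasurableSpace α] {μ : Measure α}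

theorem exists_two_pow_lt_le {x : ℝ} (hx : 1 < x) : ∃ k : ℕ, 2 ^ k < x ∧ x ≤ 2 ^ (k + 1) := by
  classical
  have h : ∃ n : ℕ, x ≤ 2 ^ n := (pow_unbounded_of_one_lt x one_lt_two).imp fun _ => le_of_lt
  obtain ⟨k, hk⟩ : ∃ k, Nat.find h = k + 1 :=
    Nat.exists_eq_succ_of_ne_zero fun h0 => by simpa [h0] using (Nat.find_spec h).trans_lt' hx
  exact ⟨k, not_le.1 (Nat.find_min h (by omega)), hk ▸ Nat.find_spec h⟩

theorem dyadic_term_eq {a m q r : ℝ} (ha : 0 < a) (hm : 0 ≤ m) (k : ℕ) :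
    (2 * (a * 2 ^ k)) ^ q * (m / (a * 2 ^ k)) ^ r =
      2 ^ q * m ^ r * a ^ (q - r) * (2 ^ (q - r)) ^ k := by
  have ht : 0 < a * 2 ^ k := by positivity
  rw [Real.mul_rpow zero_le_two ht.le, Real.div_rpow hm ht.le, Real.mul_rpow ha.le (by positivity),
    Real.mul_rpow ha.le (by positivity), ← Real.rpow_natCast, ← Real.rpow_natCast,
    ← Real.rpow_mul zero_le_two, ← Real.rpow_mul zero_le_two, ← Real.rpow_mul zero_le_two,
    Real.rpow_sub ha, sub_mul, Real.rpow_sub zero_lt_two]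
  field_simp

theorem setLIntegral_abs_rpow_le_of_distribution_le {f : α → ℝ} (hf : Measurable f)
    {q r m a : ℝ} (hq : 0 ≤ q) (hqr : q < r) (hm : 0 ≤ m) (ha : 0 < a)
    (h_weak : ∀ l > 0, μ {x | l < |f x|} ≤ ENNReal.ofReal ((m / l) ^ r)) :
    ∫⁻ x in {x | a < |f x|}, ENNReal.ofReal (|f x| ^ q) ∂μ ≤
      ENNReal.ofReal (2 ^ q / (1 - 2 ^ (q - r)) * m ^ r * a ^ (q - r)) := by
  set ρ : ℝ := 2 ^ (q - r)
  have hρ0 : 0 ≤ ρ := by positivity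
  have hρ1 : ρ < 1 := Real.rpow_lt_one_of_one_lt_of_neg one_lt_two (by linarith)
  set c : ℝ := 2 ^ q * m ^ r * a ^ (q - r)
  set A : ℕ → Set α := fun k => {x | a * 2 ^ k < |f x| ∧ |f x| ≤ 2 * (a * 2 ^ k)}
  have h_cover : {x | a < |f x|} ⊆ ⋃ k, A k := fun x hx => by
    obtain ⟨k, hk⟩ := exists_two_pow_lt_le ((one_lt_div ha).2 hx)
    refine mem_iUnion.2 ⟨k, ?_, ?_⟩
    · simpa [lt_div_iff₀ ha, mul_comm] using hk.1
    · simpa [div_le_iff₀ ha, pow_succ, mul_comm, mul_left_comm] using hk.2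
  have h_piece (k : ℕ) :
      ∫⁻ x in A k, ENNReal.ofReal (|f x| ^ q) ∂μ ≤ ENNReal.ofReal (c * ρ ^ k) := by
    have ht : 0 < a * 2 ^ k := by positivity
    calc ∫⁻ x in A k, ENNReal.ofReal (|f x| ^ q) ∂μ
        ≤ ∫⁻ _ in A k, ENNReal.ofReal ((2 * (a * 2 ^ k)) ^ q) ∂μ :=
          setLIntegral_mono' (measurableSet_lt measurable_const hf.abs |>.inter
            (measurableSet_le hf.abs measurable_const)) fun x hx =>
            ENNReal.ofReal_le_ofReal (Real.rpow_le_rpow (abs_nonneg _) hx.2 hq)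
      _ = ENNReal.ofReal ((2 * (a * 2 ^ k)) ^ q) * μ (A k) := setLIntegral_const _ _
      _ ≤ ENNReal.ofReal ((2 * (a * 2 ^ k)) ^ q) * ENNReal.ofReal ((m / (a * 2 ^ k)) ^ r) :=
          mul_le_mul_right ((measure_mono fun x hx => hx.1).trans (h_weak _ ht)) _
      _ = ENNReal.ofReal (c * ρ ^ k) := by
          rw [← ENNReal.ofReal_mul (by positivity), dyadic_term_eq ha hm]
  calc ∫⁻ x in {x | a < |f x|}, ENNReal.ofReal (|f x| ^ q) ∂μ
      ≤ ∫⁻ x in ⋃ k, A k, ENNReal.ofReal (|f x| ^ q) ∂μ := lintegral_mono_set h_cover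
    _ ≤ ∑' k, ∫⁻ x in A k, ENNReal.ofReal (|f x| ^ q) ∂μ := lintegral_iUnion_le _ _
    _ ≤ ∑' k, ENNReal.ofReal c * ENNReal.ofReal ρ ^ k := by
        refine ENNReal.tsum_le_tsum fun k => (h_piece k).trans_eq ?_
        rw [ENNReal.ofReal_mul (by positivity), ENNReal.ofReal_pow hρ0]
    _ = ENNReal.ofReal (2 ^ q / (1 - ρ) * m ^ r * a ^ (q - r)) := by
        rw [ENNReal.tsum_mul_left, ENNReal.tsum_geometric, ← ENNReal.ofReal_one,
          ← ENNReal.ofReal_sub _ hρ0, ← ENNReal.ofReal_inv_of_pos (by linarith),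
          ← ENNReal.ofReal_mul (by positivity)]
        congr 1
        ring

theorem eLpNorm_three_restrict_pow_le_of_distribution_le {f : α → ℝ} (hf : Measurable f) {r m D : ℝ}
    (hr : 3 < r) (hm : 0 < m) (hD : 0 < D)
    (h_weak : ∀ l > 0, μ {x | l < |f x|} ≤ ENNReal.ofReal ((m / l) ^ r)) :
    eLpNorm f 3 (μ.restrict {x | D * m ^ (r / (r - 3)) < |f x|}) ^ 3 ≤
      ENNReal.ofReal (2 ^ (3 : ℝ) / (1 - 2 ^ (3 - r)) * D ^ (3 - r)) := by
  have h := setLIntegral_abs_rpow_le_of_distribution_le hf (q := 3)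
    (a := D * m ^ (r / (r - 3))) (by norm_num) hr hm.le (by positivity) h_weak
  have h_scale : m ^ r * (D * m ^ (r / (r - 3))) ^ (3 - r) = D ^ (3 - r) := by
    rw [Real.mul_rpow hD.le (by positivity), ← Real.rpow_mul hm.le, mul_left_comm,
      ← Real.rpow_add hm]
    have : r + r / (r - 3) * (3 - r) = 0 := by
      field_simp [(by linarith : r - 3 ≠ 0)]
      ring
    rw [this, Real.rpow_zero, mul_one]
  rw [mul_assoc, h_scale] at h
  convert h using 1
  have h_pow := eLpNorm_nnreal_pow_eq_lintegral (f := f)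
    (μ := μ.restrict {x | D * m ^ (r / (r - 3)) < |f x|}) (p := 3) three_ne_zero
  simp only [NNReal.coe_ofNat, ENNReal.coe_ofNat, ENNReal.rpow_ofNat] at h_pow
  refine h_pow.trans (lintegral_congr fun x => ?_)
  rw [Real.enorm_eq_ofReal_abs, ← ENNReal.ofReal_pow (abs_nonneg _)]
  norm_cast

end WeakTail

theorem max_one_rpow_le {x p s : ℝ} (hx : 0 ≤ x) (hps : p ≤ s) : max x 1 ^ p ≤ x ^ s + 1 := by
  rcases le_total x 1 with hx1 | hx1
  · rw [max_eq_right hx1, Real.one_rpow]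
    linarith [Real.rpow_nonneg hx s]
  · rw [max_eq_left hx1]
    linarith [Real.rpow_le_rpow_of_exponent_le hx1 hps]

theorem sq_mul_max_one_rpow_le {D x r s : ℝ} (hx : 0 ≤ x) (hr : 3 < r) (hs : 0 < s)
    (hrs : 2 / s + 3 / r ≤ 1) : (D * max x 1 ^ (r / (r - 3))) ^ 2 ≤ D ^ 2 * (x ^ s + 1) := by
  have h_exp : r / (r - 3) * 2 ≤ s := by
    rw [div_add_div _ _ hs.ne' (by linarith), div_le_one (by positivity)] at hrs
    rw [div_mul_eq_mul_div, div_le_iff₀ (by linarith)]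
    linarith
  rw [mul_pow, ← Real.rpow_mul_natCast (by positivity)]
  exact mul_le_mul_of_nonneg_left (max_one_rpow_le hx h_exp) (sq_nonneg D)

theorem ENNReal.toReal_sq_le_of_sq_le {x y z : ℝ≥0∞} {b c : ℝ} (hb : 0 ≤ b) (hc : 0 ≤ c)
    (hy : y ≠ ∞) (hz : z ≠ ∞)
    (h : x ^ 2 ≤ ENNReal.ofReal b * y ^ 2 + ENNReal.ofReal c * z ^ 2) :
    x ≠ ∞ ∧ x.toReal ^ 2 ≤ b * y.toReal ^ 2 + c * z.toReal ^ 2 := by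
  have h_rhs : ENNReal.ofReal b * y ^ 2 + ENNReal.ofReal c * z ^ 2 ≠ ∞ := by finiteness
  have hx : x ≠ ∞ := fun hx => h_rhs (top_le_iff.1 (by simpa [hx] using h))
  refine ⟨hx, ?_⟩
  have := ENNReal.toReal_mono h_rhs h
  rwa [ENNReal.toReal_add (by finiteness) (by finiteness), ENNReal.toReal_mul, ENNReal.toReal_mul,
    ENNReal.toReal_ofReal hb, ENNReal.toReal_ofReal hc, ENNReal.toReal_pow, ENNReal.toReal_pow,
    ENNReal.toReal_pow] at this

theorem volume_lt_abs_le_of_weakLNorm_le {r m : ℝ} (hr : 0 < r) (hm : 0 ≤ m)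
    {f : ℝ³ → ℝ} (hf : weakLNorm r f ≤ ENNReal.ofReal m) {l : ℝ}
    (hl : 0 < l) : volume {x | l < |f x|} ≤ ENNReal.ofReal ((m / l) ^ r) := by
  have h_root : volume {x | l < |f x|} ^ (1 / r) ≤ ENNReal.ofReal (m / l) := by
    rw [ENNReal.ofReal_div_of_pos hl, ENNReal.le_div_iff_mul_le (by simp [hl]) (by simp), mul_comm]
    exact (le_iSup₂ (f := fun (l : ℝ) (_ : 0 < l) =>
      ENNReal.ofReal l * volume {x | l < |f x|} ^ (1 / r)) l hl).trans hf
  calc volume {x | l < |f x|} = (volume {x | l < |f x|} ^ (1 / r)) ^ r := by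
        rw [← ENNReal.rpow_mul, one_div_mul_cancel hr.ne', ENNReal.rpow_one]
    _ ≤ ENNReal.ofReal (m / l) ^ r := ENNReal.rpow_le_rpow h_root hr.le
    _ = ENNReal.ofReal ((m / l) ^ r) := ENNReal.ofReal_rpow_of_nonneg (by positivity) hr.le

theorem eLpNorm_six_le_eLpNorm_gradient {g : ℝ³ → ℝ} (hg : ContDiff ℝ 1 g)
    (hg_L2 : eLpNorm g 2 volume ≠ ∞) :
    eLpNorm g 6 volume ≤
      eLpNormLESNormFDerivOfEqInnerConst (volume : Measure ℝ³) 2 *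
      eLpNorm (fun x => ‖gradient g x‖) 2 volume := by
  have h_grad : eLpNorm (fun x => ‖gradient g x‖) 2 volume = eLpNorm (fderiv ℝ g) 2 volume :=
    eLpNorm_congr_norm_ae (ae_of_all _ fun x => by simp [gradient])
  rw [h_grad]
  exact_mod_cast eLpNorm_le_eLpNorm_fderiv_of_eq_inner_of_eLpNorm_ne_top hg
    (p := 2) (p' := 6) (by exact_mod_cast hg_L2) one_le_two (by simp) (by norm_num)

/-- Replacing `‖f‖` by `max ‖f‖ 1` keeps the threshold positive when `f = 0` a.e. -/
theorem exists_threshold_eLpNorm_three_le {r η : ℝ} (hr : 3 < r) (hη : 0 < η) :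
    ∃ D > 0, ∀ f : ℝ³ → ℝ, Measurable f → weakLNorm r f ≠ ∞ →
      eLpNorm f 3 (volume.restrict
        {x | D * max (weakLNorm r f).toReal 1 ^ (r / (r - 3)) < |f x|}) ≤ ENNReal.ofReal η := by
  obtain ⟨D, hDη, hD⟩ : ∃ D, 2 ^ (3 : ℝ) / (1 - 2 ^ (3 - r)) * D ^ (3 - r) ≤ η ^ 3 ∧ 0 < D := by
    have h_lim := (tendsto_rpow_neg_atTop (by linarith : 0 < r - 3)).const_mul
      (2 ^ (3 : ℝ) / (1 - 2 ^ (3 - r)))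
    rw [mul_zero, neg_sub] at h_lim
    exact ((h_lim.eventually (ge_mem_nhds (by positivity))).and (eventually_gt_atTop 0)).exists
  refine ⟨D, hD, fun f hf hf_weak => (ENNReal.pow_le_pow_left_iff three_ne_zero).1 ?_⟩
  have hm : weakLNorm r f ≤ ENNReal.ofReal (max (weakLNorm r f).toReal 1) :=
    (ENNReal.ofReal_toReal hf_weak).symm.trans_le (ENNReal.ofReal_le_ofReal (le_max_left _ _))
  refine (eLpNorm_three_restrict_pow_le_of_distribution_le hf hr (by positivity) hD fun l hl =>
    volume_lt_abs_le_of_weakLNorm_le (by linarith) (by positivity) hm hl).trans ?_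
  rw [← ENNReal.ofReal_pow hη.le]
  exact ENNReal.ofReal_le_ofReal hDη

theorem eLpNorm_mul_sq_le_gradient {f g : ℝ³ → ℝ} (hf : Measurable f) (hg : ContDiff ℝ 1 g)
    (hg_L2 : eLpNorm g 2 volume ≠ ∞) (a : ℝ) :
    eLpNorm (fun x => f x * g x) 2 volume ^ 2 ≤
      ((eLpNormLESNormFDerivOfEqInnerConst (volume : Measure ℝ³) 2 : ℝ≥0∞) *
          eLpNorm f 3 (volume.restrict {x | a < |f x|})) ^ 2 *
        eLpNorm (fun x => ‖gradient g x‖) 2 volume ^ 2 +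
      ENNReal.ofReal a ^ 2 * eLpNorm g 2 volume ^ 2 := by
  set c : ℝ≥0∞ := (eLpNormLESNormFDerivOfEqInnerConst (volume : Measure ℝ³) 2 : ℝ≥0∞)
  calc eLpNorm (fun x => f x * g x) 2 volume ^ 2
      ≤ eLpNorm f 3 (volume.restrict {x | a < |f x|}) ^ 2 * eLpNorm g 6 volume ^ 2 +
          ENNReal.ofReal a ^ 2 * eLpNorm g 2 volume ^ 2 :=
        eLpNorm_mul_sq_le hf hg.continuous.aestronglyMeasurable a
    _ ≤ eLpNorm f 3 (volume.restrict {x | a < |f x|}) ^ 2 *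
          (c * eLpNorm (fun x => ‖gradient g x‖) 2 volume) ^ 2 +
          ENNReal.ofReal a ^ 2 * eLpNorm g 2 volume ^ 2 := by
        gcongr
        exact eLpNorm_six_le_eLpNorm_gradient hg hg_L2
    _ = _ := by ring

/-- Weak-Lebesgue interpolation estimate (Lemma 2.4):
`‖f g‖_{L²}² ≤ ε ‖∇g‖_{L²}² + C (‖f‖_{L^r_ω}^s + 1) ‖g‖_{L²}²`. -/
theorem weak_lebesgue_interpolation (r s : ℝ) (hr : 3 < r) (hs : 0 < s)
    (hrs : 2 / s + 3 / r ≤ 1) :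
    ∀ ε : ℝ, 0 < ε →
      ∃ C : ℝ, 0 < C ∧
        ∀ f g : EuclideanSpace ℝ (Fin 3) → ℝ,
          Measurable f → weakLNorm r f ≠ ∞ →
          ContDiff ℝ 1 g →
          eLpNorm g 2 volume ≠ ∞ →
          eLpNorm (fun x => ‖gradient g x‖) 2 volume ≠ ∞ →
          MemLp (fun x => f x * g x) 2 volume ∧
            (eLpNorm (fun x => f x * g x) 2 volume).toReal ^ 2 ≤
              ε * (eLpNorm (fun x => ‖gradient g x‖) 2 volume).toReal ^ 2 +
                C * ((weakLNorm r f).toReal ^ s + 1) * (eLpNorm g 2 volume).toReal ^ 2 := by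
  intro ε hε
  set c : ℝ≥0 := eLpNormLESNormFDerivOfEqInnerConst (volume : Measure ℝ³) 2
  obtain ⟨η, hη, hcη⟩ : ∃ η > 0, ((c : ℝ) * η) ^ 2 ≤ ε := by
    refine ⟨√ε / (c + 1), by positivity, ?_⟩
    rw [mul_div_assoc', div_pow, mul_pow, Real.sq_sqrt hε.le, div_le_iff₀ (by positivity)]
    nlinarith [c.coe_nonneg]
  obtain ⟨D, hD, h_tail⟩ := exists_threshold_eLpNorm_three_le hr hη
  refine ⟨D ^ 2, by positivity, fun f g hf hf_weak hg hg_L2 hg'_L2 => ?_⟩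
  have h_sq : eLpNorm (fun x => f x * g x) 2 volume ^ 2 ≤
      ENNReal.ofReal ε * eLpNorm (fun x => ‖gradient g x‖) 2 volume ^ 2 +
        ENNReal.ofReal (D ^ 2 * ((weakLNorm r f).toReal ^ s + 1)) * eLpNorm g 2 volume ^ 2 := by
    refine (eLpNorm_mul_sq_le_gradient hf hg hg_L2
      (D * max (weakLNorm r f).toReal 1 ^ (r / (r - 3)))).trans (add_le_add ?_ ?_)
    · gcongr
      calc _ ≤ ((c : ℝ≥0∞) * ENNReal.ofReal η) ^ 2 := by gcongr; exact h_tail f hf hf_weak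
        _ = ENNReal.ofReal (((c : ℝ) * η) ^ 2) := by
          rw [ENNReal.ofReal_pow (by positivity), ENNReal.ofReal_mul c.coe_nonneg,
            ENNReal.ofReal_coe_nnreal]
        _ ≤ ENNReal.ofReal ε := ENNReal.ofReal_le_ofReal hcη
    · rw [← ENNReal.ofReal_pow (by positivity)]
      gcongr
      exact sq_mul_max_one_rpow_le ENNReal.toReal_nonneg hr hs hrs
  obtain ⟨h_fin, h_le⟩ := ENNReal.toReal_sq_le_of_sq_le hε.le (by positivity) hg'_L2 hg_L2 h_sq
  exact ⟨⟨(hf.mul hg.continuous.measurable).aestronglyMeasurable, h_fin.lt_top⟩, by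
    simpa only [mul_assoc] using h_le⟩
end

section
/- Let T > 0 and let A ≥ 0 and B ≥ 0 be real numbers with A·B ≤ 1/64. Let E : [0,T] → ℝ be continuous with E(t) ≥ 0 for all t ∈ [0,T], with E(0) ≤ 8A, and suppose that for every t ∈ [0,T] one has E(t) ≤ 2A + √B · E(t)^{3/2} + B · E(t)². Then E(t) ≤ 8A for all t ∈ [0,T]. -/
/-- Abstract continuity (bootstrap) argument underlying Lemma 4.3: a continuous
nonnegative function on `[0,T]` satisfying `E ≤ 2A + √B·E^{3/2} + B·E²` with `A·B ≤ 1/64`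
and `E(0) ≤ 8A` stays bounded by `8A`. -/
theorem bootstrap_estimate (T A B : ℝ) (hT : 0 < T) (hA : 0 ≤ A) (hB : 0 ≤ B)
    (hAB : A * B ≤ 1 / 64) (E : ℝ → ℝ)
    (hE_cont : ContinuousOn E (Set.Icc 0 T))
    (hE_nonneg : ∀ t ∈ Set.Icc 0 T, 0 ≤ E t)
    (hE0 : E 0 ≤ 8 * A)
    (hE_ineq : ∀ t ∈ Set.Icc 0 T,
      E t ≤ 2 * A + Real.sqrt B * E t ^ ((3 : ℝ) / 2) + B * E t ^ 2) :
    ∀ t ∈ Set.Icc 0 T, E t ≤ 8 * A := by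
  intro t ht
  by_contra hgt
  push_neg at hgt
  rcases eq_or_lt_of_le hB with hB0 | hBpos
  · have h := hE_ineq t ht
    rw [← hB0] at h
    simp [Real.sqrt_zero] at h
    linarith
  · set v : ℝ := min (8 * A + 1 / (100 * B)) ((8 * A + E t) / 2) with hv
    have hv8 : 8 * A < v := by
      apply lt_min
      · have : 0 < 1 / (100 * B) := by positivity
        linarith
      · linarith
    have hvE : v < E t := by
      have : v ≤ (8 * A + E t) / 2 := min_le_right _ _
      linarith
    have hv0 : 0 < v := by linarith
    obtain ⟨s, hs, hEs⟩ : v ∈ E '' Set.Icc 0 t := by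
      apply intermediate_value_Icc ht.1 (hE_cont.mono ?_)
      · exact ⟨by linarith, hvE.le⟩
      · exact Set.Icc_subset_Icc le_rfl ht.2
    have hsT : s ∈ Set.Icc 0 T := ⟨hs.1, hs.2.trans ht.2⟩
    have hineq := hE_ineq s hsT
    rw [hEs] at hineq
    have hBv : B * v ≤ 27 / 200 := by
      have h1 : v ≤ 8 * A + 1 / (100 * B) := min_le_left _ _
      have h2 : B * v ≤ B * (8 * A + 1 / (100 * B)) :=
        mul_le_mul_of_nonneg_left h1 hB
      have h3 : B * (1 / (100 * B)) = 1 / 100 := by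
        field_simp
      nlinarith
    have hrw : Real.sqrt B * v ^ ((3 : ℝ) / 2) = Real.sqrt (B * v) * v := by
      rw [Real.sqrt_mul hB, show ((3 : ℝ) / 2) = 1 / 2 + 1 by norm_num,
        Real.rpow_add hv0, Real.rpow_one, ← Real.sqrt_eq_rpow]
      ring
    rw [hrw] at hineq
    have hs2 : Real.sqrt (B * v) ^ 2 = B * v := Real.sq_sqrt (by positivity)
    have hs2n : 0 ≤ Real.sqrt (B * v) := Real.sqrt_nonneg _
    nlinarith [mul_pos hv0 hv0, sq_nonneg (Real.sqrt (B * v) * v - v),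
      mul_le_mul_of_nonneg_left hBv hv0.le,
      mul_le_mul_of_nonneg_right hBv hs2n, hs2, hineq, hv8, hv0]
end
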